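/- arXiv:1808.08710 — 9 statements merged into one kernel-verified Lean document; each statement's English description precedes it below -/
import Mathlib

section
/- For positive integers x and y, the inequality C(y,2) + C(⌈2x/y⌉,2) < x + y - 1 holds if and only if (y = 2 and x ∈ {1,2}) or (y = 3 and x = 3). -/
/-!
Write `c = ⌈2x/y⌉`, so that `2x ≤ cy`. Doubling the inequality and using `2x ≤ cy` gives
`y² + c² + 2 < cy + 3y + c`, and completing squares in two ways,
`(2c - y - 1)² + 3y² - 14y + 7 < 0` and `(2y - c - 3)² + 3c² - 10c - 1 < 0`,
forces `y ≤ 4` and `c ≤ 3`, hence `x ≤ 6`. The remaining cases are checked by computation.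
-/

theorem Nat.ceil_natCast_div_natCast {K : Type*} [Semifield K] [LinearOrder K]
    [IsStrictOrderedRing K] [FloorSemiring K] (m n : ℕ) : ⌈(m : K) / n⌉₊ = m ⌈/⌉ n := by
  rcases n.eq_zero_or_pos with rfl | hn
  · simp
  refine eq_of_forall_ge_iff fun c => ?_
  rw [Nat.ceil_le, div_le_iff₀ (by exact_mod_cast hn), ceilDiv_le_iff_le_smul hn, smul_eq_mul,
    mul_comm]
  exact_mod_cast Iff.rfl

theorem Nat.two_mul_choose_two_add_self (n : ℕ) : 2 * n.choose 2 + n = n * n := by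
  rw [Nat.choose_two_right, Nat.mul_div_cancel' (Nat.even_mul_pred_self n).two_dvd]
  cases n <;> simp [Nat.mul_succ]

theorem le_four_and_le_three_of_choose_two_add_choose_two_lt {x y c : ℕ}
    (hxy : 2 * x ≤ y * c) (h : y.choose 2 + c.choose 2 < x + y - 1) : y ≤ 4 ∧ c ≤ 3 := by
  have hy := y.two_mul_choose_two_add_self
  have hc := c.two_mul_choose_two_add_self
  have key : y * y + c * c + 2 < y * c + 3 * y + c := by omega
  zify at key
  constructor
  · by_contra! hy5
    nlinarith [sq_nonneg (2 * (c : ℤ) - y - 1)]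
  · by_contra! hc4
    nlinarith [sq_nonneg (2 * (y : ℤ) - c - 3)]

theorem choose_two_add_choose_two_ceilDiv_lt_iff {x y : ℕ} (hy : 0 < y) :
    y.choose 2 + (2 * x ⌈/⌉ y).choose 2 < x + y - 1 ↔
      (y = 2 ∧ (x = 1 ∨ x = 2)) ∨ (y = 3 ∧ x = 3) := by
  have hxy : 2 * x ≤ y * (2 * x ⌈/⌉ y) := (ceilDiv_le_iff_le_smul hy).1 le_rfl
  have finite_check : ∀ x ∈ Finset.range 7, ∀ y ∈ Finset.Icc 1 4,
      (y.choose 2 + (2 * x ⌈/⌉ y).choose 2 < x + y - 1 ↔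
        (y = 2 ∧ (x = 1 ∨ x = 2)) ∨ (y = 3 ∧ x = 3)) := by
    decide
  have of_bounded (hx7 : x < 7) (hy4 : y ≤ 4) :=
    finite_check x (Finset.mem_range.2 hx7) y (Finset.mem_Icc.2 ⟨hy, hy4⟩)
  constructor
  · intro h
    obtain ⟨hy4, hc3⟩ := le_four_and_le_three_of_choose_two_add_choose_two_lt hxy h
    exact (of_bounded (by nlinarith) hy4).1 h
  · intro h
    exact (of_bounded (by omega) (by omega)).2 h

theorem lem_chiant_general (x y : ℕ) (hy : 0 < y) :
    (y.choose 2 + ((⌈(2 * (x : ℚ)) / (y : ℚ)⌉).toNat).choose 2 < x + y - 1) ↔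
      ((y = 2 ∧ (x = 1 ∨ x = 2)) ∨ (y = 3 ∧ x = 3)) := by
  have hcast : 2 * (x : ℚ) = ((2 * x : ℕ) : ℚ) := by push_cast; rfl
  rw [Int.ceil_toNat, hcast, Nat.ceil_natCast_div_natCast]
  exact choose_two_add_choose_two_ceilDiv_lt_iff hy

theorem lem_chiant (x y : ℕ) (hx : 0 < x) (hy : 0 < y) :
    (y.choose 2 + ((⌈(2 * (x : ℚ)) / (y : ℚ)⌉).toNat).choose 2 < x + y - 1) ↔
      ((y = 2 ∧ (x = 1 ∨ x = 2)) ∨ (y = 3 ∧ x = 3)) :=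
  lem_chiant_general x y hy
end

section
/- If x and y are positive integers satisfying 4x² - 2(y² + y)x + (y⁴ - 3y³ + 2y²) < 0, then 1 ≤ y ≤ 4. -/
theorem trinomial_y_bound (x y : ℤ) (hx : 0 < x) (hy : 0 < y)
    (h : 4 * x ^ 2 - 2 * (y ^ 2 + y) * x + (y ^ 4 - 3 * y ^ 3 + 2 * y ^ 2) < 0) :
    1 ≤ y ∧ y ≤ 4 := by
  refine ⟨hy, ?_⟩
  nlinarith [sq_nonneg (4 * x - (y ^ 2 + y)), sq_nonneg y, sq_nonneg (y - 4), mul_pos hy hy]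
end

section
/- For positive integers x and y with y ≥ 2, the inequality C(y,2) + C(⌈2x/y⌉,2) < x + y - 1 implies 4x² - 2(y²+y)x + (y⁴ - 3y³ + 2y²) < 0. -/
theorem choose_ineq_implies_trinomial (x y : ℕ) (hx : 0 < x) (hy : 2 ≤ y)
    (h : y.choose 2 + ((⌈(2 * (x : ℚ)) / (y : ℚ)⌉).toNat).choose 2 < x + y - 1) :
    4 * (x : ℤ) ^ 2 - 2 * ((y : ℤ) ^ 2 + (y : ℤ)) * (x : ℤ) +
      ((y : ℤ) ^ 4 - 3 * (y : ℤ) ^ 3 + 2 * (y : ℤ) ^ 2) < 0 := by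
  have hy0 : (0:ℚ) < y := by exact_mod_cast (by omega : 0 < y)
  have hx0 : (0:ℚ) < x := by exact_mod_cast hx
  set t : ℚ := 2 * (x:ℚ) / y with htdef
  have ht : 0 < t := by positivity
  have hc : (1:ℤ) ≤ ⌈t⌉ := Int.ceil_pos.mpr ht
  set m : ℕ := (⌈t⌉).toNat with hmdef
  have hmz : ((m:ℕ):ℤ) = ⌈t⌉ := Int.toNat_of_nonneg (by linarith)
  have hm1 : 1 ≤ (m:ℚ) := by
    have : (1:ℤ) ≤ (m:ℤ) := by rw [hmz]; exact hc
    exact_mod_cast this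
  have hmt : t ≤ (m:ℚ) := by
    have h1 : ((m:ℤ):ℚ) = ((⌈t⌉:ℤ):ℚ) := by exact_mod_cast hmz
    have := Int.le_ceil t
    push_cast at h1 ⊢
    linarith [h1 ▸ this]
  have h' : y.choose 2 + m.choose 2 + 1 < x + y := by omega
  have hQ : (y:ℚ)*((y:ℚ)-1)/2 + (m:ℚ)*((m:ℚ)-1)/2 + 1 < (x:ℚ) + y := by
    have := (Nat.cast_lt (α := ℚ)).mpr h'
    push_cast at this
    rw [Nat.cast_choose_two, Nat.cast_choose_two] at this
    linarith
  have hty : t * (y:ℚ) = 2 * x := by rw [htdef]; field_simp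
  have key : 4 * (x:ℚ) ^ 2 - 2 * ((y:ℚ) ^ 2 + (y:ℚ)) * (x:ℚ) +
      ((y:ℚ) ^ 4 - 3 * (y:ℚ) ^ 3 + 2 * (y:ℚ) ^ 2) < 0 := by
    have hsq : (t^2 - t) ≤ ((m:ℚ)^2 - m) := by nlinarith [mul_nonneg (sub_nonneg.mpr hmt) (by linarith : (0:ℚ) ≤ (m:ℚ) + t - 1)]
    have hmul : (t^2 - t) * y^2 ≤ ((m:ℚ)^2 - m) * y^2 :=
      mul_le_mul_of_nonneg_right hsq (by positivity)
    nlinarith [mul_lt_mul_of_pos_right hQ (by positivity : (0:ℚ) < (y:ℚ)^2), hty, sq_nonneg ((y:ℚ))]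
  exact_mod_cast key
end

section
/- In a connected bipartite graph G with bipartition (A, B) and at least one edge, for any edge uv with u ∈ A and v ∈ B, the line generated by u and v in the graph metric is the entire vertex set (a universal line). -/
/-- The line generated by `a` and `b` in the shortest-path metric of `G`:
`{a, b}` together with all vertices collinear with `a` and `b`. -/
def graphLine {V : Type*} (G : SimpleGraph V) (a b : V) : Set V :=
  {a, b} ∪ {c | G.dist a c + G.dist c b = G.dist a b ∨
                G.dist c a + G.dist a b = G.dist c b ∨
                G.dist a b + G.dist b c = G.dist a c}

theorem bipartite_edge_line_universal {V : Type*} (G : SimpleGraph V)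
    (hconn : G.Connected) (A B : Set V)
    (hunion : A ∪ B = Set.univ) (hdisj : Disjoint A B)
    (hA : ∀ u ∈ A, ∀ v ∈ A, ¬ G.Adj u v)
    (hB : ∀ u ∈ B, ∀ v ∈ B, ¬ G.Adj u v)
    (u v : V) (hu : u ∈ A) (hv : v ∈ B) (huv : G.Adj u v) :
    graphLine G u v = Set.univ := by
  classical
  set f : V → ZMod 2 := fun x => if x ∈ A then 0 else 1 with hf
  have hmem : ∀ x : V, x ∈ A ∨ x ∈ B := fun x => by
    have : x ∈ A ∪ B := by rw [hunion]; trivial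
    exact this
  have hvA : v ∉ A := fun h => hdisj.ne_of_mem h hv rfl
  have hstep : ∀ x y : V, G.Adj x y → f y = f x + 1 := by
    intro x y hxy
    rcases hmem x with hx | hx
    · have hy : y ∉ A := fun hy => hA x hx y hy hxy
      simp [hf, hx, hy]
    · have hxA : x ∉ A := fun h => hdisj.ne_of_mem h hx rfl
      have hy : y ∉ B := fun hy => hB x hx y hy hxy
      have hyA : y ∈ A := (hmem y).resolve_right hy
      simp [hf, hxA, hyA]
      decide
  have hwalk : ∀ (x y : V) (p : G.Walk x y), f y = f x + (p.length : ZMod 2) := by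
    intro x y p
    induction p with
    | nil => simp
    | cons h q ih =>
      rw [SimpleGraph.Walk.length_cons, ih, hstep _ _ h]
      push_cast
      ring
  have hdist : ∀ x y : V, f y = f x + (G.dist x y : ZMod 2) := by
    intro x y
    obtain ⟨p, hp⟩ := hconn.exists_walk_length_eq_dist x y
    rw [← hp]; exact hwalk x y p
  have hpar : ∀ x y : V, f x = f y → G.dist x y % 2 = 0 := by
    intro x y hxy
    have h := hdist x y
    rw [hxy, left_eq_add, ZMod.natCast_eq_zero_iff] at h
    omega
  have hpar' : ∀ x y : V, f x ≠ f y → G.dist x y % 2 = 1 := by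
    intro x y hxy
    have h := hdist x y
    by_contra hodd
    have h2 : (2 : ℕ) ∣ G.dist x y := by omega
    rw [(ZMod.natCast_eq_zero_iff _ _).mpr h2, add_zero] at h
    exact hxy h.symm
  have hfu : f u = 0 := by simp [hf, hu]
  have hfv : f v = 1 := by simp [hf, hvA]
  have huv1 : G.dist u v = 1 := SimpleGraph.dist_eq_one_iff_adj.mpr huv
  ext w
  simp only [graphLine, Set.mem_union, Set.mem_setOf_eq, Set.mem_univ, iff_true]
  right
  have t1 : G.dist u w ≤ G.dist u v + G.dist v w := hconn.dist_triangle
  have t2 : G.dist v w ≤ G.dist v u + G.dist u w := hconn.dist_triangle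
  rw [SimpleGraph.dist_comm (u := v) (v := u), huv1] at t2
  rw [huv1] at t1
  have s1 : G.dist w u = G.dist u w := SimpleGraph.dist_comm
  have s2 : G.dist w v = G.dist v w := SimpleGraph.dist_comm
  rcases hmem w with hw | hw
  · have e1 : G.dist u w % 2 = 0 := hpar u w (by simp [hf, hu, hw])
    have e2 : G.dist v w % 2 = 1 := hpar' v w (by simp [hf, hvA, hw])
    omega
  · have hwA : w ∉ A := fun h => hdisj.ne_of_mem h hw rfl
    have e1 : G.dist u w % 2 = 1 := hpar' u w (by simp [hf, hu, hwA])
    have e2 : G.dist v w % 2 = 0 := hpar v w (by simp [hf, hvA, hwA])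
    omega
end

section
/- If a connected graph G has a bridge (cut-edge) uv, then the line generated by u and v in the graph metric is universal. -/
/-!
Take geodesics `q` from `w` to `u` and `p` from `w` to `v`. The walk `q⁻¹ p` joins the ends of
the bridge, so it crosses the edge `uv`: either `v` lies on `q` or `u` lies on `p`. A vertex on a
geodesic lies between its endpoints, so `v` is between `w` and `u`, or `u` between `w` and `v`.
-/

namespace SimpleGraph

variable {V : Type*} {G : SimpleGraph V}

theorem Walk.dist_add_dist_of_mem_support_of_length_eq_dist [DecidableEq V] {u v x : V}
    (p : G.Walk u v) (hp : p.length = G.dist u v) (hx : x ∈ p.support) :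
    G.dist u x + G.dist x v = G.dist u v := by
  have hlen : (p.takeUntil x hx).length + (p.dropUntil x hx).length = p.length := by
    rw [← Walk.length_append, p.take_spec hx]
  have hle : G.dist u x + G.dist x v ≤ G.dist u v :=
    hp ▸ hlen ▸ add_le_add (G.dist_le _) (G.dist_le _)
  have hge : G.dist u v ≤ G.dist u x + G.dist x v :=
    (p.takeUntil x hx).reachable.dist_triangle_left v
  omega

theorem IsBridge.mem_support_or_mem_support {u v w : V} (hb : G.IsBridge s(u, v))
    (q : G.Walk w u) (p : G.Walk w v) : v ∈ q.support ∨ u ∈ p.support := by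
  have hmem := isBridge_iff_forall_walk_mem_edges.mp hb (q.reverse.append p)
  rw [Walk.edges_append, Walk.edges_reverse, List.mem_append, List.mem_reverse] at hmem
  exact hmem.imp q.snd_mem_support_of_mem_edges p.fst_mem_support_of_mem_edges

theorem IsBridge.dist_add_dist_eq_or (hconn : G.Connected) {u v : V} (hb : G.IsBridge s(u, v))
    (w : V) :
    G.dist w v + G.dist v u = G.dist w u ∨ G.dist w u + G.dist u v = G.dist w v := by
  classical
  obtain ⟨q, hq⟩ := hconn.exists_walk_length_eq_dist w u
  obtain ⟨p, hp⟩ := hconn.exists_walk_length_eq_dist w v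
  exact (hb.mem_support_or_mem_support q p).imp
    (q.dist_add_dist_of_mem_support_of_length_eq_dist hq)
    (p.dist_add_dist_of_mem_support_of_length_eq_dist hp)

end SimpleGraph

theorem bridge_line_universal {V : Type*} (G : SimpleGraph V)
    (hconn : G.Connected) (u v : V) (hbridge : G.IsBridge s(u, v)) :
    graphLine G u v = Set.univ := by
  refine Set.eq_univ_of_forall fun w => Or.inr ?_
  rcases hbridge.dist_add_dist_eq_or hconn w with hv | hu
  · refine Or.inr (Or.inr ?_)
    rw [G.dist_comm (u := u) (v := w), G.dist_comm (u := v) (v := w), G.dist_comm (u := u)]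
    omega
  · exact Or.inr (Or.inl hu)
end

section
/- Every connected bisplit graph has diameter at most 4. -/
namespace SimpleGraph

variable {V : Type*} {G : SimpleGraph V}

lemma dist_le_two_of_adj_of_adj {u v w : V} (huw : G.Adj u w) (hwv : G.Adj w v) :
    G.dist u v ≤ 2 :=
  G.dist_le (huw.toWalk.append hwv.toWalk)

lemma dist_le_two_of_forall_adj {Y Z : Set V} (hY : Y.Nonempty) (hZ : Z.Nonempty)
    (hcomplete : ∀ y ∈ Y, ∀ z ∈ Z, G.Adj y z) {p q : V} (hp : p ∈ Y ∪ Z) (hq : q ∈ Y ∪ Z) :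
    G.dist p q ≤ 2 := by
  obtain ⟨y, hy⟩ := hY
  obtain ⟨z, hz⟩ := hZ
  rcases hp with hpY | hpZ <;> rcases hq with hqY | hqZ
  · exact dist_le_two_of_adj_of_adj (hcomplete p hpY z hz) (hcomplete q hqY z hz).symm
  · exact (dist_eq_one_iff_adj.2 (hcomplete p hpY q hqZ)).trans_le one_le_two
  · exact (dist_eq_one_iff_adj.2 (hcomplete q hqY p hpZ).symm).trans_le one_le_two
  · exact dist_le_two_of_adj_of_adj (hcomplete y hy p hpZ).symm (hcomplete y hy q hqZ)

lemma exists_notMem_dist_le_one {X : Set V} (hX : ∀ u ∈ X, ∀ v ∈ X, ¬ G.Adj u v)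
    (hdeg : ∀ x ∈ X, ∃ w, G.Adj x w) (u : V) : ∃ p ∉ X, G.dist u p ≤ 1 := by
  by_cases hu : u ∈ X
  · obtain ⟨w, hw⟩ := hdeg u hu
    exact ⟨w, fun hwX => hX u hu w hwX hw, (dist_eq_one_iff_adj.2 hw).le⟩
  · exact ⟨u, hu, by simp⟩

lemma Connected.dist_le_add_two_of_forall_exists_dist_le_one (hconn : G.Connected)
    {S : Set V} {d : ℕ} (hS : ∀ p ∈ S, ∀ q ∈ S, G.dist p q ≤ d)
    (hdom : ∀ u, ∃ p ∈ S, G.dist u p ≤ 1) (u v : V) : G.dist u v ≤ d + 2 := by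
  obtain ⟨p, hp, hup⟩ := hdom u
  obtain ⟨q, hq, hvq⟩ := hdom v
  calc G.dist u v ≤ G.dist u p + G.dist p v := hconn.dist_triangle
    _ ≤ G.dist u p + (G.dist p q + G.dist q v) := by gcongr; exact hconn.dist_triangle
    _ ≤ 1 + (d + 1) := by grw [hup, hS p hp q hq, dist_comm, hvq]
    _ = d + 2 := by ring

end SimpleGraph

theorem bisplit_diameter_le_four_general {V : Type*} (G : SimpleGraph V)
    (hconn : G.Connected) (X Y Z : Set V)
    (hcover : X ∪ Y ∪ Z = Set.univ)
    (hYne : Y.Nonempty) (hZne : Z.Nonempty)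
    (hXstable : ∀ u ∈ X, ∀ v ∈ X, ¬ G.Adj u v)
    (hcomplete : ∀ y ∈ Y, ∀ z ∈ Z, G.Adj y z)
    (hXdeg : ∀ x ∈ X, ∃ w, G.Adj x w) :
    ∀ u v : V, G.dist u v ≤ 4 := by
  have hYZ : Xᶜ ⊆ Y ∪ Z := fun p hp => by
    have hp' : p ∈ X ∪ Y ∪ Z := hcover ▸ Set.mem_univ p
    rw [Set.union_assoc] at hp'
    exact hp'.resolve_left hp
  exact hconn.dist_le_add_two_of_forall_exists_dist_le_one
    (fun p hp q hq => SimpleGraph.dist_le_two_of_forall_adj hYne hZne hcomplete (hYZ hp) (hYZ hq))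
    (SimpleGraph.exists_notMem_dist_le_one hXstable hXdeg)

theorem bisplit_diameter_le_four {V : Type*} (G : SimpleGraph V)
    (hconn : G.Connected) (X Y Z : Set V)
    (hcover : X ∪ Y ∪ Z = Set.univ)
    (hXY : Disjoint X Y) (hXZ : Disjoint X Z) (hYZ : Disjoint Y Z)
    (hYne : Y.Nonempty) (hZne : Z.Nonempty)
    (hXstable : ∀ u ∈ X, ∀ v ∈ X, ¬ G.Adj u v)
    (hYstable : ∀ u ∈ Y, ∀ v ∈ Y, ¬ G.Adj u v)
    (hZstable : ∀ u ∈ Z, ∀ v ∈ Z, ¬ G.Adj u v)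
    (hcomplete : ∀ y ∈ Y, ∀ z ∈ Z, G.Adj y z)
    (hXdeg : ∀ x ∈ X, ∃ w, G.Adj x w) :
    ∀ u v : V, G.dist u v ≤ 4 :=
  bisplit_diameter_le_four_general G hconn X Y Z hcover hYne hZne hXstable hcomplete hXdeg
end

section
/- Let G be a bisplit graph with partition (X, Y, Z) where every vertex of X has a neighbor in both Y and Z, and let a ∈ X. For every x ∈ X distinct from a, the line L(a,x) intersects X exactly in {a, x}; consequently the lines L(a,x) for x ∈ X \ {a} are pairwise distinct, giving |X| - 1 distinct lines through a. -/
theorem Set.injOn_of_inter_eq_pair {α : Type*} {f : α → Set α} {S : Set α} {a : α}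
    (h : ∀ x ∈ S \ {a}, f x ∩ S = {a, x}) : Set.InjOn f (S \ {a}) := by
  intro x hx y hy hxy
  have hxy' : x ∈ f y ∩ S := by
    rw [← hxy, h x hx]
    exact Set.mem_insert_of_mem a rfl
  rw [h y hy] at hxy'
  exact hxy'.resolve_left hx.2

section

variable {V : Type*} {G : SimpleGraph V}

theorem graphLine_inter_eq_pair {S : Set V}
    (hS : ∀ u ∈ S, ∀ v ∈ S, u ≠ v → 2 ≤ G.dist u v ∧ G.dist u v ≤ 3)
    {a x : V} (ha : a ∈ S) (hx : x ∈ S) (hxa : x ≠ a) :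
    graphLine G a x ∩ S = {a, x} := by
  refine Set.Subset.antisymm ?_ (Set.insert_subset ⟨.inl (.inl rfl), ha⟩
    (Set.singleton_subset_iff.2 ⟨.inl (.inr rfl), hx⟩))
  rintro c ⟨hc | hc, hcS⟩
  · exact hc
  by_contra hne
  simp only [Set.mem_insert_iff, Set.mem_singleton_iff, not_or] at hne
  have hac := hS a ha c hcS (Ne.symm hne.1)
  have hcx := hS c hcS x hx hne.2
  have hax := hS a ha x hx (Ne.symm hxa)
  have hca : G.dist c a = G.dist a c := G.dist_comm
  have hxc : G.dist x c = G.dist c x := G.dist_comm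
  simp only [Set.mem_ofPred_eq] at hc
  omega

theorem two_le_dist_and_dist_le_three {X Y Z : Set V}
    (hXstable : ∀ u ∈ X, ∀ v ∈ X, ¬ G.Adj u v)
    (hcomplete : ∀ y ∈ Y, ∀ z ∈ Z, G.Adj y z)
    (hXnbrY : ∀ x ∈ X, ∃ y ∈ Y, G.Adj x y)
    (hXnbrZ : ∀ x ∈ X, ∃ z ∈ Z, G.Adj x z) :
    ∀ u ∈ X, ∀ v ∈ X, u ≠ v → 2 ≤ G.dist u v ∧ G.dist u v ≤ 3 := by
  intro u hu v hv huv
  obtain ⟨y, hy, huy⟩ := hXnbrY u hu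
  obtain ⟨z, hz, hvz⟩ := hXnbrZ v hv
  let p : G.Walk u v := .cons huy (.cons (hcomplete y hy z hz) (.cons hvz.symm .nil))
  exact ⟨p.reachable.one_lt_dist_of_ne_of_not_adj huv (hXstable u hu v hv), G.dist_le p⟩

end

theorem lines_through_a_in_X_general {V : Type*} (G : SimpleGraph V)
    (X Y Z : Set V)
    (hXstable : ∀ u ∈ X, ∀ v ∈ X, ¬ G.Adj u v)
    (hcomplete : ∀ y ∈ Y, ∀ z ∈ Z, G.Adj y z)
    (hXnbrY : ∀ x ∈ X, ∃ y ∈ Y, G.Adj x y)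
    (hXnbrZ : ∀ x ∈ X, ∃ z ∈ Z, G.Adj x z)
    (a : V) (ha : a ∈ X) :
    (∀ x ∈ X, x ≠ a → graphLine G a x ∩ X = {a, x}) ∧
    Set.InjOn (fun x => graphLine G a x) (X \ {a}) ∧
    ((fun x => graphLine G a x) '' (X \ {a})).ncard = X.ncard - 1 := by
  have hdist := two_le_dist_and_dist_le_three hXstable hcomplete hXnbrY hXnbrZ
  have hline : ∀ x ∈ X, x ≠ a → graphLine G a x ∩ X = {a, x} :=
    fun x hx hxa => graphLine_inter_eq_pair hdist ha hx hxa
  have hinj : Set.InjOn (graphLine G a) (X \ {a}) :=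
    Set.injOn_of_inter_eq_pair fun x hx => hline x hx.1 hx.2
  exact ⟨hline, hinj, by rw [hinj.ncard_image, Set.ncard_sdiff_singleton_of_mem ha]⟩

theorem lines_through_a_in_X {V : Type*} [Fintype V] (G : SimpleGraph V)
    (hconn : G.Connected) (X Y Z : Set V)
    (hcover : X ∪ Y ∪ Z = Set.univ)
    (hXY : Disjoint X Y) (hXZ : Disjoint X Z) (hYZ : Disjoint Y Z)
    (hYne : Y.Nonempty) (hZne : Z.Nonempty)
    (hXstable : ∀ u ∈ X, ∀ v ∈ X, ¬ G.Adj u v)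
    (hYstable : ∀ u ∈ Y, ∀ v ∈ Y, ¬ G.Adj u v)
    (hZstable : ∀ u ∈ Z, ∀ v ∈ Z, ¬ G.Adj u v)
    (hcomplete : ∀ y ∈ Y, ∀ z ∈ Z, G.Adj y z)
    (hXnbrY : ∀ x ∈ X, ∃ y ∈ Y, G.Adj x y)
    (hXnbrZ : ∀ x ∈ X, ∃ z ∈ Z, G.Adj x z)
    (a : V) (ha : a ∈ X) :
    (∀ x ∈ X, x ≠ a → graphLine G a x ∩ X = {a, x}) ∧
    Set.InjOn (fun x => graphLine G a x) (X \ {a}) ∧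
    ((fun x => graphLine G a x) '' (X \ {a})).ncard = X.ncard - 1 :=
  lines_through_a_in_X_general G X Y Z hXstable hcomplete hXnbrY hXnbrZ a ha
end

section
/- Let G be a bisplit graph with partition (X, Y, Z) where every vertex of X has a neighbor in both Y and Z, and let a, x ∈ X. If d(a,x) = 2 then L(a,x) = {a,x} ∪ (N(a) ∩ N(x)); and if d(a,x) = 3 then L(a,x) = {a,x} ∪ N(a) ∪ N(x). -/
theorem line_formula_in_X {V : Type*} (G : SimpleGraph V)
    (hconn : G.Connected) (X Y Z : Set V)
    (hcover : X ∪ Y ∪ Z = Set.univ)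
    (hXY : Disjoint X Y) (hXZ : Disjoint X Z) (hYZ : Disjoint Y Z)
    (hYne : Y.Nonempty) (hZne : Z.Nonempty)
    (hXstable : ∀ u ∈ X, ∀ v ∈ X, ¬ G.Adj u v)
    (hYstable : ∀ u ∈ Y, ∀ v ∈ Y, ¬ G.Adj u v)
    (hZstable : ∀ u ∈ Z, ∀ v ∈ Z, ¬ G.Adj u v)
    (hcomplete : ∀ y ∈ Y, ∀ z ∈ Z, G.Adj y z)
    (hXnbrY : ∀ x ∈ X, ∃ y ∈ Y, G.Adj x y)
    (hXnbrZ : ∀ x ∈ X, ∃ z ∈ Z, G.Adj x z)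
    (a x : V) (ha : a ∈ X) (hx : x ∈ X) :
    (G.dist a x = 2 →
      graphLine G a x = {a, x} ∪ (G.neighborSet a ∩ G.neighborSet x)) ∧
    (G.dist a x = 3 →
      graphLine G a x = {a, x} ∪ G.neighborSet a ∪ G.neighborSet x) := by
  classical
  -- everyone is in X ∪ Y ∪ Z
  have hmem : ∀ v : V, v ∈ X ∨ v ∈ Y ∨ v ∈ Z := by
    intro v
    have : v ∈ X ∪ Y ∪ Z := by rw [hcover]; exact Set.mem_univ v
    simpa [Set.mem_union, or_assoc] using this
  have heq0 : ∀ u v : V, G.dist u v = 0 → u = v := fun u v h =>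
    (hconn.dist_eq_zero_iff).mp h
  have hadj1 : ∀ u v : V, G.Adj u v → G.dist u v = 1 := fun u v h =>
    SimpleGraph.dist_eq_one_iff_adj.mpr h
  -- distance from a vertex outside X to a vertex of X is at most 2
  have hd2 : ∀ c, c ∉ X → ∀ w ∈ X, G.dist c w ≤ 2 := by
    intro c hc w hw
    by_cases hcw : c = w
    · subst hcw; simp [SimpleGraph.dist_self]
    rcases hmem c with h | h | h
    · exact absurd h hc
    · obtain ⟨z, hz, hadj⟩ := hXnbrZ w hw
      have h1 : G.Adj c z := hcomplete c h z hz
      have := SimpleGraph.dist_le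
        (SimpleGraph.Walk.cons h1 (SimpleGraph.Walk.cons hadj.symm SimpleGraph.Walk.nil))
      simpa using this
    · obtain ⟨y, hy, hadj⟩ := hXnbrY w hw
      have h1 : G.Adj c y := (hcomplete y hy c h).symm
      have := SimpleGraph.dist_le
        (SimpleGraph.Walk.cons h1 (SimpleGraph.Walk.cons hadj.symm SimpleGraph.Walk.nil))
      simpa using this
  -- distance between two vertices of X is at most 3
  have hd3 : ∀ c ∈ X, ∀ w ∈ X, G.dist c w ≤ 3 := by
    intro c hc w hw
    obtain ⟨y, hy, hcy⟩ := hXnbrY c hc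
    obtain ⟨z, hz, hwz⟩ := hXnbrZ w hw
    have hyz : G.Adj y z := hcomplete y hy z hz
    have := SimpleGraph.dist_le
      (SimpleGraph.Walk.cons hcy (SimpleGraph.Walk.cons hyz
        (SimpleGraph.Walk.cons hwz.symm SimpleGraph.Walk.nil)))
    simpa using this
  -- neighbors of a vertex of X are outside X
  have hnbr : ∀ w ∈ X, ∀ c, G.Adj w c → c ∉ X := by
    intro w hw c hadj hc
    exact hXstable w hw c hc hadj
  have hne1 : ∀ u v : V, u ≠ v → 1 ≤ G.dist u v := fun u v h =>
    hconn.pos_dist_of_ne h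
  constructor
  · -- distance 2 case
    intro h2
    have hax : a ≠ x := by
      intro h; subst h; simp [SimpleGraph.dist_self] at h2
    ext c
    simp only [graphLine, Set.mem_union, Set.mem_insert_iff, Set.mem_singleton_iff,
      Set.mem_setOf_eq, Set.mem_inter_iff, SimpleGraph.mem_neighborSet]
    constructor
    · rintro ((rfl | rfl) | h1 | h1 | h1)
      · exact Or.inl (Or.inl rfl)
      · exact Or.inl (Or.inr rfl)
      · -- dist a c + dist c x = 2
        rw [h2] at h1
        by_cases hca : c = a
        · exact Or.inl (Or.inl hca)
        by_cases hcx : c = x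
        · exact Or.inl (Or.inr hcx)
        have g1 : 1 ≤ G.dist a c := hne1 a c (fun h => hca h.symm)
        have g2 : 1 ≤ G.dist c x := hne1 c x hcx
        have e1 : G.dist a c = 1 := by omega
        have e2 : G.dist c x = 1 := by omega
        exact Or.inr ⟨SimpleGraph.dist_eq_one_iff_adj.mp e1,
          (SimpleGraph.dist_eq_one_iff_adj.mp e2).symm⟩
      · -- dist c a + dist a x = dist c x
        rw [h2] at h1
        by_cases hcX : c ∈ X
        · have h3 : G.dist c x ≤ 3 := hd3 c hcX x hx
          have : G.dist c a ≤ 1 := by omega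
          rcases Nat.lt_or_ge (G.dist c a) 1 with hlt | hge
          · have : G.dist c a = 0 := by omega
            exact Or.inl (Or.inl (heq0 c a this))
          · have e : G.dist c a = 1 := by omega
            exact absurd (SimpleGraph.dist_eq_one_iff_adj.mp e)
              (hXstable c hcX a ha)
        · have h3 : G.dist c x ≤ 2 := hd2 c hcX x hx
          have : G.dist c a = 0 := by omega
          exact Or.inl (Or.inl (heq0 c a this))
      · -- dist a x + dist x c = dist a c
        rw [h2] at h1
        by_cases hcX : c ∈ X
        · have h3 : G.dist a c ≤ 3 := hd3 a ha c hcX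
          have : G.dist x c ≤ 1 := by omega
          rcases Nat.lt_or_ge (G.dist x c) 1 with hlt | hge
          · have : G.dist x c = 0 := by omega
            exact Or.inl (Or.inr (heq0 x c this).symm)
          · have e : G.dist x c = 1 := by omega
            exact absurd (SimpleGraph.dist_eq_one_iff_adj.mp e)
              (hXstable x hx c hcX)
        · have h3 : G.dist a c ≤ 2 := by
            rw [SimpleGraph.dist_comm]; exact hd2 c hcX a ha
          have : G.dist x c = 0 := by omega
          exact Or.inl (Or.inr (heq0 x c this).symm)
    · rintro ((rfl | rfl) | ⟨h1, h2'⟩)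
      · exact Or.inr (Or.inl (by simp))
      · exact Or.inr (Or.inl (by simp))
      · refine Or.inr (Or.inl ?_)
        rw [hadj1 a c h1, SimpleGraph.dist_comm, hadj1 x c h2', h2]
  · -- distance 3 case
    intro h3
    have hax : a ≠ x := by
      intro h; subst h; simp [SimpleGraph.dist_self] at h3
    ext c
    simp only [graphLine, Set.mem_union, Set.mem_insert_iff, Set.mem_singleton_iff,
      Set.mem_setOf_eq, SimpleGraph.mem_neighborSet]
    constructor
    · rintro ((rfl | rfl) | h1 | h1 | h1)
      · exact Or.inl (Or.inl (Or.inl rfl))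
      · exact Or.inl (Or.inl (Or.inr rfl))
      · -- dist a c + dist c x = 3
        rw [h3] at h1
        by_cases hca : c = a
        · exact Or.inl (Or.inl (Or.inl hca))
        by_cases hcx : c = x
        · exact Or.inl (Or.inl (Or.inr hcx))
        have g1 : 1 ≤ G.dist a c := hne1 a c (fun h => hca h.symm)
        have g2 : 1 ≤ G.dist c x := hne1 c x hcx
        rcases Nat.lt_or_ge (G.dist a c) 2 with hlt | hge
        · have e : G.dist a c = 1 := by omega
          exact Or.inl (Or.inr (SimpleGraph.dist_eq_one_iff_adj.mp e))
        · have e : G.dist c x = 1 := by omega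
          exact Or.inr (SimpleGraph.dist_eq_one_iff_adj.mp e).symm
      · -- dist c a + dist a x = dist c x
        rw [h3] at h1
        have hcx : G.dist c x ≤ 3 := by
          by_cases hcX : c ∈ X
          · exact hd3 c hcX x hx
          · exact le_trans (hd2 c hcX x hx) (by norm_num)
        have : G.dist c a = 0 := by omega
        exact Or.inl (Or.inl (Or.inl (heq0 c a this)))
      · -- dist a x + dist x c = dist a c
        rw [h3] at h1
        have hac : G.dist a c ≤ 3 := by
          by_cases hcX : c ∈ X
          · exact hd3 a ha c hcX
          · rw [SimpleGraph.dist_comm]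
            exact le_trans (hd2 c hcX a ha) (by norm_num)
        have : G.dist x c = 0 := by omega
        exact Or.inl (Or.inl (Or.inr (heq0 x c this).symm))
    · rintro (((rfl | rfl) | hac) | hxc)
      · exact Or.inr (Or.inl (by simp))
      · exact Or.inr (Or.inl (by simp))
      · -- c is a neighbor of a : show dist a c + dist c x = 3
        refine Or.inr (Or.inl ?_)
        have e1 : G.dist a c = 1 := hadj1 a c hac
        have hcX : c ∉ X := hnbr a ha c hac
        have hle : G.dist c x ≤ 2 := hd2 c hcX x hx
        have hne : c ≠ x := by
          rintro rfl
          rw [e1] at h3; omega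
        have g1 : 1 ≤ G.dist c x := hne1 c x hne
        have hnot1 : G.dist c x ≠ 1 := by
          intro e2
          have hcx : G.Adj c x := SimpleGraph.dist_eq_one_iff_adj.mp e2
          have := SimpleGraph.dist_le
            (SimpleGraph.Walk.cons hac (SimpleGraph.Walk.cons hcx SimpleGraph.Walk.nil))
          simp at this; omega
        have e2 : G.dist c x = 2 := by omega
        rw [e1, e2, h3]
      · -- c is a neighbor of x : show dist a c + dist c x = 3
        refine Or.inr (Or.inl ?_)
        have e2 : G.dist c x = 1 := by
          rw [SimpleGraph.dist_comm]; exact hadj1 x c hxc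
        have hcX : c ∉ X := hnbr x hx c hxc
        have hle : G.dist a c ≤ 2 := by
          rw [SimpleGraph.dist_comm]; exact hd2 c hcX a ha
        have hne : a ≠ c := by
          rintro rfl
          rw [e2] at h3; omega
        have g1 : 1 ≤ G.dist a c := hne1 a c hne
        have hnot1 : G.dist a c ≠ 1 := by
          intro e1
          have hac : G.Adj a c := SimpleGraph.dist_eq_one_iff_adj.mp e1
          have := SimpleGraph.dist_le
            (SimpleGraph.Walk.cons hac (SimpleGraph.Walk.cons hxc.symm SimpleGraph.Walk.nil))
          simp at this; omega
        have e1 : G.dist a c = 2 := by omega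
        rw [e1, e2, h3]
end

section
/- Let G be a connected bisplit graph with partition (X, Y, Z) and let X_Y ⊆ X be the vertices with all neighbors in Y; assume X_Y is nonempty and G has no universal line. Then there exist y, y' ∈ Y and z ∈ Z such that the lines L(y,z) and L(y',z) are distinct; moreover every line L(y,z) with y ∈ Y, z ∈ Z contains all of X_Y ∪ Y ∪ Z. -/
namespace factYZaux

variable {V : Type*} {G : SimpleGraph V} {a b c w w' : V}

lemma mem_line_left : a ∈ graphLine G a b := Or.inl (Or.inl rfl)

lemma mem_line_right : b ∈ graphLine G a b := Or.inl (Or.inr rfl)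

lemma dist_le_two (h1 : G.Adj a w) (h2 : G.Adj w b) : G.dist a b ≤ 2 := by
  simpa using SimpleGraph.dist_le (SimpleGraph.Walk.cons h1 (SimpleGraph.Walk.cons h2
    SimpleGraph.Walk.nil))

lemma dist_le_three (h1 : G.Adj a w) (h2 : G.Adj w w') (h3 : G.Adj w' b) : G.dist a b ≤ 3 := by
  simpa using SimpleGraph.dist_le (SimpleGraph.Walk.cons h1 (SimpleGraph.Walk.cons h2
    (SimpleGraph.Walk.cons h3 SimpleGraph.Walk.nil)))

lemma common_of_dist_two (h : G.dist a b = 2) : ∃ w, G.Adj a w ∧ G.Adj w b := by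
  obtain ⟨p, hp⟩ := SimpleGraph.exists_walk_of_dist_ne_zero (by omega : G.dist a b ≠ 0)
  rw [h] at hp
  cases p with
  | nil => simp at hp
  | cons h1 q =>
    cases q with
    | nil => simp at hp
    | cons h2 r =>
      cases r with
      | nil => exact ⟨_, h1, h2⟩
      | cons h3 s => simp [SimpleGraph.Walk.length_cons] at hp

lemma chain_of_dist_three (h : G.dist a b = 3) :
    ∃ w w', G.Adj a w ∧ G.Adj w w' ∧ G.Adj w' b := by
  obtain ⟨p, hp⟩ := SimpleGraph.exists_walk_of_dist_ne_zero (by omega : G.dist a b ≠ 0)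
  rw [h] at hp
  cases p with
  | nil => simp at hp
  | cons h1 q =>
    cases q with
    | nil => simp at hp
    | cons h2 r =>
      cases r with
      | nil => simp at hp
      | cons h3 s =>
        cases s with
        | nil => exact ⟨_, _, h1, h2, h3⟩
        | cons h4 t => simp [SimpleGraph.Walk.length_cons] at hp

lemma dist_eq_two (hc : G.Connected) (hne : a ≠ b) (hnadj : ¬ G.Adj a b)
    (h1 : G.Adj a w) (h2 : G.Adj w b) : G.dist a b = 2 := by
  have hle := dist_le_two h1 h2
  have h0 := hc.pos_dist_of_ne hne
  have h1' : G.dist a b ≠ 1 := fun h => hnadj (SimpleGraph.dist_eq_one_iff_adj.mp h)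
  omega

/-- Key lemma: if `a` and `b` are adjacent and `c` has different distances to them,
then `c` is on the line of `a` and `b`. -/
lemma mem_line_of_adj (hc : G.Connected) (hab : G.Adj a b)
    (h : G.dist c a ≠ G.dist c b) : c ∈ graphLine G a b := by
  have h1 : G.dist a b = 1 := SimpleGraph.dist_eq_one_iff_adj.mpr hab
  have t1 : G.dist c a ≤ G.dist c b + G.dist b a := hc.dist_triangle
  have t2 : G.dist c b ≤ G.dist c a + G.dist a b := hc.dist_triangle
  have e1 : G.dist b a = G.dist a b := SimpleGraph.dist_comm
  have e2 : G.dist b c = G.dist c b := SimpleGraph.dist_comm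
  have e3 : G.dist a c = G.dist c a := SimpleGraph.dist_comm
  right
  simp only [Set.mem_setOf_eq]
  rw [h1, e2, e3] at *
  omega

end factYZaux

theorem fact_YZ {V : Type*} (G : SimpleGraph V)
    (hconn : G.Connected) (X Y Z : Set V)
    (hcover : X ∪ Y ∪ Z = Set.univ)
    (hXY : Disjoint X Y) (hXZ : Disjoint X Z) (hYZ : Disjoint Y Z)
    (hYne : Y.Nonempty) (hZne : Z.Nonempty)
    (hXstable : ∀ u ∈ X, ∀ v ∈ X, ¬ G.Adj u v)
    (hYstable : ∀ u ∈ Y, ∀ v ∈ Y, ¬ G.Adj u v)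
    (hZstable : ∀ u ∈ Z, ∀ v ∈ Z, ¬ G.Adj u v)
    (hcomplete : ∀ y ∈ Y, ∀ z ∈ Z, G.Adj y z)
    (hXdeg : ∀ x ∈ X, ∃ w, G.Adj x w)
    (XY : Set V) (hXYdef : XY = {x ∈ X | ∀ w, G.Adj x w → w ∈ Y})
    (hXYne : XY.Nonempty)
    (hnouniv : ∀ a b : V, a ≠ b → graphLine G a b ≠ Set.univ) :
    (∃ y ∈ Y, ∃ y' ∈ Y, ∃ z ∈ Z, graphLine G y z ≠ graphLine G y' z) ∧
    (∀ y ∈ Y, ∀ z ∈ Z, XY ∪ Y ∪ Z ⊆ graphLine G y z) := by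
  subst hXYdef
  have hmem : ∀ v : V, v ∈ X ∨ v ∈ Y ∨ v ∈ Z := by
    intro v
    have hv : v ∈ X ∪ Y ∪ Z := by rw [hcover]; exact Set.mem_univ v
    rcases hv with (h | h) | h
    exacts [Or.inl h, Or.inr (Or.inl h), Or.inr (Or.inr h)]
  -- Part 2: every such line contains XY ∪ Y ∪ Z.
  have part2 : ∀ y ∈ Y, ∀ z ∈ Z,
      {x ∈ X | ∀ w, G.Adj x w → w ∈ Y} ∪ Y ∪ Z ⊆ graphLine G y z := by
    intro y hy z hz c hc
    have hyz : G.Adj y z := hcomplete y hy z hz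
    rcases hc with (hcXY | hcY) | hcZ
    · obtain ⟨hcX, hcnbr⟩ := hcXY
      have hcz : ¬ G.Adj c z := fun h => Set.disjoint_left.mp hYZ (hcnbr z h) hz
      have hcnez : c ≠ z := fun h => Set.disjoint_left.mp hXZ hcX (h ▸ hz)
      obtain ⟨w, hw⟩ := hXdeg c hcX
      have hwY : w ∈ Y := hcnbr w hw
      have hd2 : G.dist c z = 2 :=
        factYZaux.dist_eq_two hconn hcnez hcz hw (hcomplete w hwY z hz)
      apply factYZaux.mem_line_of_adj hconn hyz
      rw [hd2]
      by_cases hcy : G.Adj c y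
      · rw [SimpleGraph.dist_eq_one_iff_adj.mpr hcy]; omega
      · intro h2
        obtain ⟨w', hw1, hw2⟩ := factYZaux.common_of_dist_two h2
        exact hYstable w' (hcnbr w' hw1) y hy hw2
    · by_cases hcy : c = y
      · rw [hcy]; exact factYZaux.mem_line_left
      · apply factYZaux.mem_line_of_adj hconn hyz
        rw [SimpleGraph.dist_eq_one_iff_adj.mpr (hcomplete c hcY z hz)]
        intro h
        exact hYstable c hcY y hy (SimpleGraph.dist_eq_one_iff_adj.mp h)
    · by_cases hcz : c = z
      · rw [hcz]; exact factYZaux.mem_line_right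
      · apply factYZaux.mem_line_of_adj hconn hyz
        rw [SimpleGraph.dist_eq_one_iff_adj.mpr (hcomplete y hy c hcZ).symm]
        intro h
        exact hZstable c hcZ z hz (SimpleGraph.dist_eq_one_iff_adj.mp h.symm)
  refine ⟨?_, part2⟩
  -- Part 1: by contradiction, assume all lines L(y, z) with the same z coincide.
  by_contra hcon
  push_neg at hcon
  -- Step A: any x ∈ X with a neighbor in Y and a neighbor in Z is complete to Y.
  have stepA : ∀ x ∈ X, ∀ y1 ∈ Y, ∀ z1 ∈ Z, G.Adj x y1 → G.Adj x z1 →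
      ∀ y ∈ Y, G.Adj x y := by
    intro x hx y1 hy1 z1 hz1 hxy1 hxz1 y hy
    by_contra hxy
    have hxney : x ≠ y := fun h => Set.disjoint_left.mp hXY hx (h ▸ hy)
    have hxyd : G.dist x y = 2 :=
      factYZaux.dist_eq_two hconn hxney hxy hxz1 (hcomplete y hy z1 hz1).symm
    have hxz1d : G.dist x z1 = 1 := SimpleGraph.dist_eq_one_iff_adj.mpr hxz1
    have hmem1 : x ∈ graphLine G y z1 :=
      factYZaux.mem_line_of_adj hconn (hcomplete y hy z1 hz1) (by rw [hxyd, hxz1d]; omega)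
    rw [hcon y hy y1 hy1 z1 hz1] at hmem1
    have d1 : G.dist y1 x = 1 := SimpleGraph.dist_eq_one_iff_adj.mpr hxy1.symm
    have d2 : G.dist x z1 = 1 := hxz1d
    have d3 : G.dist y1 z1 = 1 := SimpleGraph.dist_eq_one_iff_adj.mpr (hcomplete y1 hy1 z1 hz1)
    have d4 : G.dist x y1 = 1 := SimpleGraph.dist_eq_one_iff_adj.mpr hxy1
    have d5 : G.dist z1 x = 1 := SimpleGraph.dist_eq_one_iff_adj.mpr hxz1.symm
    rcases hmem1 with hm | hm
    · rcases hm with hm | hm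
      · exact Set.disjoint_left.mp hXY hx (by rw [hm]; exact hy1)
      · exact Set.disjoint_left.mp hXZ hx (by rw [hm]; exact hz1)
    · simp only [Set.mem_setOf_eq] at hm
      rw [d1, d2, d3, d4, d5] at hm
      omega
  -- Step B: the line through a vertex of XY and its neighbor is universal.
  obtain ⟨x0, hx0X, hx0nbr⟩ := hXYne
  obtain ⟨y0, hy0adj⟩ := hXdeg x0 hx0X
  have hy0Y : y0 ∈ Y := hx0nbr y0 hy0adj
  have hne0 : x0 ≠ y0 := fun h => Set.disjoint_left.mp hXY hx0X (h ▸ hy0Y)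
  apply hnouniv x0 y0 hne0
  ext c
  simp only [Set.mem_univ, iff_true]
  by_cases hc0 : c = x0
  · rw [hc0]; exact factYZaux.mem_line_left
  by_cases hc1 : c = y0
  · rw [hc1]; exact factYZaux.mem_line_right
  apply factYZaux.mem_line_of_adj hconn hy0adj
  rcases hmem c with hcX | hcY | hcZ
  · by_cases hcy0 : G.Adj c y0
    · rw [SimpleGraph.dist_eq_one_iff_adj.mpr hcy0]
      intro h
      exact hXstable c hcX x0 hx0X (SimpleGraph.dist_eq_one_iff_adj.mp h)
    · by_cases hcz : ∃ z1 ∈ Z, G.Adj c z1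
      · obtain ⟨z1, hz1Z, hcz1⟩ := hcz
        have hd : G.dist c y0 = 2 :=
          factYZaux.dist_eq_two hconn hc1 hcy0 hcz1 (hcomplete y0 hy0Y z1 hz1Z).symm
        rw [hd]
        intro h2
        obtain ⟨w, hw1, hw2⟩ := factYZaux.common_of_dist_two h2
        have hwY : w ∈ Y := hx0nbr w hw2.symm
        exact hcy0 (stepA c hcX w hwY z1 hz1Z hw1 hcz1 y0 hy0Y)
      · push_neg at hcz
        have hnbrY : ∀ w, G.Adj c w → w ∈ Y := by
          intro w hw
          rcases hmem w with h | h | h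
          · exact absurd hw (hXstable c hcX w h)
          · exact h
          · exact absurd hw (hcz w h)
        obtain ⟨w, hw⟩ := hXdeg c hcX
        have hwY := hnbrY w hw
        obtain ⟨z, hzZ⟩ := hZne
        have hd3 : G.dist c y0 = 3 := by
          have hle := factYZaux.dist_le_three hw (hcomplete w hwY z hzZ)
            (hcomplete y0 hy0Y z hzZ).symm
          have h0 := hconn.pos_dist_of_ne hc1
          have hne1 : G.dist c y0 ≠ 1 := fun h => hcy0 (SimpleGraph.dist_eq_one_iff_adj.mp h)
          have hne2 : G.dist c y0 ≠ 2 := by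
            intro h
            obtain ⟨w', hw1, hw2⟩ := factYZaux.common_of_dist_two h
            exact hYstable w' (hnbrY w' hw1) y0 hy0Y hw2
          omega
        rw [hd3]
        intro h3
        obtain ⟨a, b, ha1, ha2, ha3⟩ := factYZaux.chain_of_dist_three h3
        exact hYstable a (hnbrY a ha1) b (hx0nbr b ha3.symm) ha2
  · obtain ⟨z, hzZ⟩ := hZne
    have hd : G.dist c y0 = 2 :=
      factYZaux.dist_eq_two hconn hc1 (hYstable c hcY y0 hy0Y) (hcomplete c hcY z hzZ)
        (hcomplete y0 hy0Y z hzZ).symm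
    rw [hd]
    intro h2
    obtain ⟨w, hw1, hw2⟩ := factYZaux.common_of_dist_two h2
    exact hYstable c hcY w (hx0nbr w hw2.symm) hw1
  · rw [SimpleGraph.dist_eq_one_iff_adj.mpr (hcomplete y0 hy0Y c hcZ).symm]
    intro h1
    have hadj : G.Adj c x0 := SimpleGraph.dist_eq_one_iff_adj.mp h1
    exact Set.disjoint_left.mp hYZ (hx0nbr c hadj.symm) hcZ
end
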